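/- Suppose λ is an infinite cardinal that is not Fréchet, and suppose that for every infinite cardinal μ < λ the set Un_{≤μ} of countably complete tail-uniform ultrafilters on ordinals ≤ μ has cardinality at most (2^μ)⁺. Then the set Un_{≤λ} of countably complete tail-uniform ultrafilters on ordinals ≤ λ has cardinality at most (2^λ)⁺. -/

import Mathlib

/-!
A principal member of `Un_{≤λ}` is `pure x` with `x < λ`. A non-principal `U` contains a set
`A ⊆ λ` of least cardinality `μ` among its members. Since `U` is non-principal, `μ` is infinite;
if `μ = λ`, pushing `U` forward along a bijection `A ≃ λ` would make `λ` Fréchet, so `μ < λ`.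
Pushing `U` forward along an injection `A → μ` lands in `Un_{≤μ}` and determines `U` among the
ultrafilters containing `A`, so `U` is coded by `A` and a member of `Un_{≤μ}`: at most
`2^λ · (2^λ)⁺` choices.
-/

/-- An ultrafilter is countably complete if every countable family of sets in it
has its intersection in it. -/
def CountablyComplete {X : Type*} (U : Ultrafilter X) : Prop :=
  ∀ s : Set (Set X), s.Countable → (∀ t ∈ s, t ∈ U) → ⋂₀ s ∈ U

/-- An ultrafilter on a set `X` is Fréchet uniform if every set in it has full cardinality. -/
def FrechetUniform {X : Type*} (U : Ultrafilter X) : Prop :=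
  ∀ A ∈ U, Cardinal.mk A = Cardinal.mk X

/-- A cardinal is Fréchet if it carries a countably complete Fréchet uniform ultrafilter. -/
def IsFrechet (l : Cardinal) : Prop :=
  ∃ U : Ultrafilter l.out, CountablyComplete U ∧ FrechetUniform U

/-- `U` is (the canonical extension to `Ordinal` of) a tail-uniform ultrafilter on the
ordinal `γ`: it concentrates on `{ξ : ξ < γ}` and contains every final segment
`{ξ : β ≤ ξ < γ}` for `β < γ`. -/
def TailUniformOn (γ : Ordinal) (U : Ultrafilter Ordinal) : Prop :=
  Set.Iio γ ∈ U ∧ ∀ β < γ, Set.Ico β γ ∈ U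

/-- `Un_{≤β}`: the countably complete tail-uniform ultrafilters on ordinals `≤ β`. -/
def UnLE (β : Ordinal) : Set (Ultrafilter Ordinal) :=
  {U | ∃ γ ≤ β, CountablyComplete U ∧ TailUniformOn γ U}

open Cardinal Set

universe u v

theorem CountablyComplete.map {X Y : Type*} {U : Ultrafilter X} (hU : CountablyComplete U)
    (f : X → Y) : CountablyComplete (U.map f) := by
  intro s hs hmem
  have h : ⋂₀ ((f ⁻¹' ·) '' s) ∈ U :=
    hU _ (hs.image _) (forall_mem_image.2 fun t ht => Ultrafilter.mem_map.1 (hmem t ht))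
  rwa [sInter_image, ← preimage_iInter₂, ← sInter_eq_biInter] at h

theorem Filter.exists_mem_forall_mk_le {X : Type u} (F : Filter X) :
    ∃ A ∈ F, ∀ B ∈ F, #A ≤ #B :=
  ⟨Function.argminOn (fun s : Set X => #s) F.sets ⟨univ, Filter.univ_mem⟩,
    Function.argminOn_mem _ _ _, fun _ hB => Function.argminOn_le (fun s : Set X => #s) _ hB⟩

theorem Set.exists_injOn_mapsTo_of_lift_mk_le {α : Type u} {β : Type v} [Nonempty β]
    {A : Set α} {B : Set β} (h : lift.{v} #A ≤ lift.{u} #B) :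
    ∃ f : α → β, InjOn f A ∧ MapsTo f A B := by
  obtain ⟨g⟩ := lift_mk_le'.1 h
  let f := Function.extend Subtype.val (fun a => (g a : β)) fun _ => Classical.arbitrary β
  have hf (x : α) (hx : x ∈ A) : f x = g ⟨x, hx⟩ :=
    Subtype.val_injective.extend_apply _ _ ⟨x, hx⟩
  refine ⟨f, fun x hx y hy hxy => ?_, fun x hx => hf x hx ▸ (g ⟨x, hx⟩).2⟩
  rw [hf x hx, hf y hy] at hxy
  exact congrArg Subtype.val (g.injective (Subtype.ext hxy))

theorem isFrechet_of_forall_mk_le {X : Type u} {l : Cardinal.{v}} {U : Ultrafilter X}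
    (hU : CountablyComplete U) {A : Set X} (hA : A ∈ U) (hmin : ∀ B ∈ U, #A ≤ #B)
    (hAl : lift.{v} #A = lift.{u} l) : IsFrechet l := by
  have : Nonempty l.out := by
    rw [← mk_ne_zero_iff, mk_out, ne_eq, ← lift_eq_zero.{u}, ← hAl, lift_eq_zero,
      ← ne_eq, mk_ne_zero_iff]
    exact (U.nonempty_of_mem hA).to_subtype
  obtain ⟨e, he, -⟩ := exists_injOn_mapsTo_of_lift_mk_le (B := univ) (by
    rw [hAl, mk_univ, mk_out])
  refine ⟨U.map e, hU.map e, fun B hB => le_antisymm (mk_set_le B) ?_⟩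
  set C := A ∩ e ⁻¹' B
  have hC : C ∈ U := Filter.inter_mem hA (Ultrafilter.mem_map.1 hB)
  rw [mk_out, ← Cardinal.lift_le.{u}, ← hAl]
  calc lift.{v} #A ≤ lift.{v} #C := Cardinal.lift_le.2 (hmin C hC)
    _ = lift.{u} #(e '' C) := (mk_image_eq_of_injOn_lift e C (he.mono inter_subset_left)).symm
    _ ≤ lift.{u} #B :=
      Cardinal.lift_le.2 (mk_le_mk_of_subset (image_subset_iff.2 inter_subset_right))

theorem mem_unLE_of_Iio_mem {U : Ultrafilter Ordinal.{u}} (hU : CountablyComplete U)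
    {o : Ordinal.{u}} (ho : Iio o ∈ U) : U ∈ UnLE o := by
  set s : Set Ordinal := {γ | Iio γ ∈ U}
  have hγ : sInf s ∈ s := csInf_mem ⟨o, ho⟩
  refine ⟨sInf s, csInf_le' (show o ∈ s from ho), hU, hγ, fun β hβ => ?_⟩
  have hβ' : Ici β ∈ U := by
    rw [← compl_Iio, Ultrafilter.compl_mem_iff_notMem]
    exact fun h => (csInf_le' (show β ∈ s from h)).not_gt hβ
  simpa only [Ici_inter_Iio, Ultrafilter.mem_coe] using Filter.inter_mem hβ' hγ

theorem mk_setOf_mem_le_mk_unLE {A : Set Ordinal.{u}} {μ : Cardinal.{u}}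
    (hA : #A ≤ lift.{u + 1} μ) :
    #{U : Ultrafilter Ordinal.{u} | CountablyComplete U ∧ A ∈ U} ≤ #(UnLE μ.ord) := by
  obtain ⟨f, hinj, hmaps⟩ := exists_injOn_mapsTo_of_lift_mk_le (A := A) (B := Iio μ.ord) (by
    simpa only [mk_Iio_ordinal, card_ord, lift_id] using hA)
  set F := {U : Ultrafilter Ordinal.{u} | CountablyComplete U ∧ A ∈ U}
  have hinjF : InjOn (Ultrafilter.map f) F := fun U hU V hV hUV =>
    Ultrafilter.coe_injective <| (Filter.map_eq_map_iff_of_injOn (m := f) hU.2 hV.2 hinj).1 <|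
      congrArg Ultrafilter.toFilter hUV
  have hmapsF : MapsTo (Ultrafilter.map f) F (UnLE μ.ord) := fun U hU =>
    mem_unLE_of_Iio_mem (hU.1.map f) (Ultrafilter.mem_map.2 (Filter.mem_of_superset hU.2 hmaps))
  rw [← mk_image_eq_of_injOn _ _ hinjF]
  exact mk_le_mk_of_subset hmapsF.image_subset

theorem exists_mem_mk_eq_lift_of_not_isFrechet {l : Cardinal.{u}} (hnf : ¬IsFrechet l)
    {U : Ultrafilter Ordinal.{u}} (hU : CountablyComplete U) (hl : Iio l.ord ∈ U)
    (hnp : ∀ x, U ≠ pure x) :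
    ∃ A ∈ U, A ⊆ Iio l.ord ∧ ∃ μ, ℵ₀ ≤ μ ∧ μ < l ∧ #A = lift.{u + 1} μ := by
  obtain ⟨A₀, hA₀, hmin₀⟩ := U.toFilter.exists_mem_forall_mk_le
  set A := A₀ ∩ Iio l.ord
  have hAU : A ∈ U := Filter.inter_mem hA₀ hl
  have hmin : ∀ B ∈ U, #A ≤ #B := fun B hB =>
    (mk_le_mk_of_subset inter_subset_left).trans (hmin₀ B hB)
  have hAl : #A ≤ lift.{u + 1} l := by
    simpa only [mk_Iio_ordinal, card_ord] using
      mk_le_mk_of_subset (inter_subset_right (s := A₀) (t := Iio l.ord))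
  obtain ⟨μ, hμ⟩ := mem_range_lift_of_le hAl
  refine ⟨A, hAU, inter_subset_right, μ, ?_, ?_, hμ.symm⟩
  · by_contra! hfin
    obtain ⟨x, -, rfl⟩ := Ultrafilter.eq_pure_of_finite_mem
      (lt_aleph0_iff_set_finite.1 (hμ ▸ lift_lt_aleph0.2 hfin)) hAU
    exact hnp x rfl
  · refine (lift_le.1 (hμ ▸ hAl)).lt_of_ne fun hμl => hnf ?_
    exact isFrechet_of_forall_mk_le hU hAU hmin (by simp [← hμ, hμl])

theorem unLE_subset_of_not_isFrechet {l : Cardinal.{u}} (hnf : ¬IsFrechet l) :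
    UnLE l.ord ⊆ pure '' Iio l.ord ∪
      ⋃ A ∈ {A : Set Ordinal | A ⊆ Iio l.ord ∧ ∃ μ, ℵ₀ ≤ μ ∧ μ < l ∧ #A = lift.{u + 1} μ},
        {U | CountablyComplete U ∧ A ∈ U} := by
  rintro U ⟨γ, hγ, hU, hγU, -⟩
  have hl : Iio l.ord ∈ U := Filter.mem_of_superset hγU (Iio_subset_Iio hγ)
  by_cases hp : ∃ x, U = pure x
  · obtain ⟨x, rfl⟩ := hp
    exact Or.inl ⟨x, hl, rfl⟩
  · obtain ⟨A, hAU, hA⟩ :=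
      exists_mem_mk_eq_lift_of_not_isFrechet hnf hU hl fun x hx => hp ⟨x, hx⟩
    exact Or.inr (mem_biUnion hA ⟨hU, hAU⟩)

/-- If the infinite cardinal `λ` is not Fréchet and `|Un_{≤μ}| ≤ (2^μ)⁺` for every
infinite cardinal `μ < λ`, then `|Un_{≤λ}| ≤ (2^λ)⁺`. -/
theorem statement10 (l : Cardinal) (hl : Cardinal.aleph0 ≤ l) (hnf : ¬ IsFrechet l)
    (hih : ∀ μ : Cardinal, Cardinal.aleph0 ≤ μ → μ < l →
      Cardinal.mk (UnLE μ.ord) ≤ Cardinal.lift.{1,0} (Order.succ (2 ^ μ))) :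
    Cardinal.mk (UnLE l.ord) ≤ Cardinal.lift.{1,0} (Order.succ (2 ^ l)) := by
  set κ := lift.{1} (Order.succ (2 ^ l))
  have h2κ : 2 ^ lift.{1} l ≤ κ := by
    rw [← lift_two.{1, 0}, ← lift_power]
    exact lift_le.2 (Order.le_succ _)
  have hlκ : lift.{1} l ≤ κ := (cantor _).le.trans h2κ
  have hκ : ℵ₀ ≤ κ := (aleph0_le_lift.2 hl).trans hlκ
  have hcover := unLE_subset_of_not_isFrechet hnf
  set 𝒜 := {A : Set Ordinal | A ⊆ Iio l.ord ∧ ∃ μ, ℵ₀ ≤ μ ∧ μ < l ∧ #A = lift.{1} μ}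
  have hprincipal : #(pure '' Iio l.ord : Set (Ultrafilter Ordinal)) ≤ κ := by
    refine mk_image_le.trans ?_
    rwa [mk_Iio_ordinal, card_ord]
  have h𝒜 : #𝒜 ≤ κ := calc
    #𝒜 ≤ #(𝒫 Iio l.ord) := mk_le_mk_of_subset fun A hA => hA.1
    _ ≤ κ := by rwa [mk_powerset, mk_Iio_ordinal, card_ord]
  have hfiber (A : 𝒜) : #{U : Ultrafilter Ordinal | CountablyComplete U ∧ A.1 ∈ U} ≤ κ := by
    obtain ⟨-, μ, hμ, hμl, hA⟩ := A.2
    calc _ ≤ #(UnLE μ.ord) := mk_setOf_mem_le_mk_unLE hA.le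
      _ ≤ lift.{1} (Order.succ (2 ^ μ)) := hih μ hμ hμl
      _ ≤ κ := lift_le.2 (Order.succ_le_succ (power_le_power_left two_ne_zero hμl.le))
  calc #(UnLE l.ord) ≤ κ + κ * κ :=
        (mk_le_mk_of_subset hcover).trans <| (mk_union_le _ _).trans <| add_le_add hprincipal <|
          (mk_biUnion_le _ _).trans (mul_le_mul' h𝒜 (ciSup_le' hfiber))
    _ = κ := by rw [mul_eq_self hκ, add_eq_self hκ]
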